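/- The Petersen graph has exactly 12 cycles of length 5. -/

import Mathlib

/-- The Petersen graph as the Kneser graph K(5,2). -/
def petersen : SimpleGraph {s : Finset (Fin 5) // s.card = 2} where
  Adj s t := Disjoint s.1 t.1
  symm := ⟨fun _ _ h => h.symm⟩
  loopless := by
    constructor
    intro s h
    have hs : s.1 = ∅ := disjoint_self.mp h
    have h2 := s.2
    rw [hs] at h2
    simp at h2

abbrev PV := {s : Finset (Fin 5) // s.card = 2}

instance : DecidableRel petersen.Adj :=
  fun s t => inferInstanceAs (Decidable (Disjoint s.1 t.1))

def vv (a b : Fin 5) (h : ({a, b} : Finset (Fin 5)).card = 2 := by decide) : PV := ⟨{a, b}, h⟩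

def S : Finset (Finset (Sym2 PV)) := {
  ({s((vv 0 1), (vv 2 3)), s((vv 2 3), (vv 0 4)), s((vv 0 4), (vv 1 2)), s((vv 1 2), (vv 3 4)), s((vv 3 4), (vv 0 1))} : Finset (Sym2 PV)),
  ({s((vv 0 1), (vv 2 3)), s((vv 2 3), (vv 0 4)), s((vv 0 4), (vv 1 3)), s((vv 1 3), (vv 2 4)), s((vv 2 4), (vv 0 1))} : Finset (Sym2 PV)),
  ({s((vv 0 1), (vv 2 3)), s((vv 2 3), (vv 1 4)), s((vv 1 4), (vv 0 2)), s((vv 0 2), (vv 3 4)), s((vv 3 4), (vv 0 1))} : Finset (Sym2 PV)),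
  ({s((vv 0 1), (vv 2 3)), s((vv 2 3), (vv 1 4)), s((vv 1 4), (vv 0 3)), s((vv 0 3), (vv 2 4)), s((vv 2 4), (vv 0 1))} : Finset (Sym2 PV)),
  ({s((vv 0 1), (vv 2 4)), s((vv 2 4), (vv 0 3)), s((vv 0 3), (vv 1 2)), s((vv 1 2), (vv 3 4)), s((vv 3 4), (vv 0 1))} : Finset (Sym2 PV)),
  ({s((vv 0 1), (vv 2 4)), s((vv 2 4), (vv 1 3)), s((vv 1 3), (vv 0 2)), s((vv 0 2), (vv 3 4)), s((vv 3 4), (vv 0 1))} : Finset (Sym2 PV)),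
  ({s((vv 0 2), (vv 1 3)), s((vv 1 3), (vv 0 4)), s((vv 0 4), (vv 1 2)), s((vv 1 2), (vv 3 4)), s((vv 3 4), (vv 0 2))} : Finset (Sym2 PV)),
  ({s((vv 0 2), (vv 1 3)), s((vv 1 3), (vv 0 4)), s((vv 0 4), (vv 2 3)), s((vv 2 3), (vv 1 4)), s((vv 1 4), (vv 0 2))} : Finset (Sym2 PV)),
  ({s((vv 0 2), (vv 1 3)), s((vv 1 3), (vv 2 4)), s((vv 2 4), (vv 0 3)), s((vv 0 3), (vv 1 4)), s((vv 1 4), (vv 0 2))} : Finset (Sym2 PV)),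
  ({s((vv 0 2), (vv 1 4)), s((vv 1 4), (vv 0 3)), s((vv 0 3), (vv 1 2)), s((vv 1 2), (vv 3 4)), s((vv 3 4), (vv 0 2))} : Finset (Sym2 PV)),
  ({s((vv 0 3), (vv 1 2)), s((vv 1 2), (vv 0 4)), s((vv 0 4), (vv 1 3)), s((vv 1 3), (vv 2 4)), s((vv 2 4), (vv 0 3))} : Finset (Sym2 PV)),
  ({s((vv 0 3), (vv 1 2)), s((vv 1 2), (vv 0 4)), s((vv 0 4), (vv 2 3)), s((vv 2 3), (vv 1 4)), s((vv 1 4), (vv 0 3))} : Finset (Sym2 PV))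
}

set_option maxHeartbeats 4000000 in
set_option maxRecDepth 100000 in
lemma key : ∀ v a b c d : PV, petersen.Adj v a → petersen.Adj a b → petersen.Adj b c →
    petersen.Adj c d → petersen.Adj d v →
    ([s(v,a), s(a,b), s(b,c), s(c,d), s(d,v)] : List (Sym2 PV)).toFinset ∈ S := by decide

def mkWalk (a b c d e : PV) (h1 : petersen.Adj a b) (h2 : petersen.Adj b c)
    (h3 : petersen.Adj c d) (h4 : petersen.Adj d e) (h5 : petersen.Adj e a) :
    petersen.Walk a a :=
  .cons h1 (.cons h2 (.cons h3 (.cons h4 (.cons h5 .nil))))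

/-- The Petersen graph has exactly 12 cycles of length 5, counted via their edge sets. -/
theorem stmt13 :
    Nat.card {E : Finset (Sym2 {s : Finset (Fin 5) // s.card = 2}) //
      ∃ (v : {s : Finset (Fin 5) // s.card = 2}) (p : petersen.Walk v v),
        p.IsCycle ∧ p.length = 5 ∧ p.edges.toFinset = E} = 12 := by
  have hiff : ∀ E : Finset (Sym2 PV),
      (∃ (v : PV) (p : petersen.Walk v v), p.IsCycle ∧ p.length = 5 ∧ p.edges.toFinset = E)
        ↔ E ∈ S := by
    intro E
    constructor
    · rintro ⟨v, p, hc, hl, he⟩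
      cases p with
      | nil => simp at hl
      | cons h1 p => cases p with
        | nil => simp at hl
        | cons h2 p => cases p with
          | nil => simp at hl
          | cons h3 p => cases p with
            | nil => simp at hl
            | cons h4 p => cases p with
              | nil => simp at hl
              | cons h5 p => cases p with
                | cons h6 p => simp [SimpleGraph.Walk.length_cons] at hl
                | nil =>
                  rw [← he]
                  exact key _ _ _ _ _ h1 h2 h3 h4 h5
    · intro hE
      fin_cases hE
      · refine ⟨(vv 0 1), mkWalk (vv 0 1) (vv 2 3) (vv 0 4) (vv 1 2) (vv 3 4) (by decide) (by decide) (by decide) (by decide) (by decide),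
          ?_, by rfl, by decide⟩
        rw [SimpleGraph.Walk.isCycle_def, SimpleGraph.Walk.isTrail_def]
        exact ⟨by decide, by simp [mkWalk], by decide⟩
      · refine ⟨(vv 0 1), mkWalk (vv 0 1) (vv 2 3) (vv 0 4) (vv 1 3) (vv 2 4) (by decide) (by decide) (by decide) (by decide) (by decide),
          ?_, by rfl, by decide⟩
        rw [SimpleGraph.Walk.isCycle_def, SimpleGraph.Walk.isTrail_def]
        exact ⟨by decide, by simp [mkWalk], by decide⟩
      · refine ⟨(vv 0 1), mkWalk (vv 0 1) (vv 2 3) (vv 1 4) (vv 0 2) (vv 3 4) (by decide) (by decide) (by decide) (by decide) (by decide),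
          ?_, by rfl, by decide⟩
        rw [SimpleGraph.Walk.isCycle_def, SimpleGraph.Walk.isTrail_def]
        exact ⟨by decide, by simp [mkWalk], by decide⟩
      · refine ⟨(vv 0 1), mkWalk (vv 0 1) (vv 2 3) (vv 1 4) (vv 0 3) (vv 2 4) (by decide) (by decide) (by decide) (by decide) (by decide),
          ?_, by rfl, by decide⟩
        rw [SimpleGraph.Walk.isCycle_def, SimpleGraph.Walk.isTrail_def]
        exact ⟨by decide, by simp [mkWalk], by decide⟩
      · refine ⟨(vv 0 1), mkWalk (vv 0 1) (vv 2 4) (vv 0 3) (vv 1 2) (vv 3 4) (by decide) (by decide) (by decide) (by decide) (by decide),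
          ?_, by rfl, by decide⟩
        rw [SimpleGraph.Walk.isCycle_def, SimpleGraph.Walk.isTrail_def]
        exact ⟨by decide, by simp [mkWalk], by decide⟩
      · refine ⟨(vv 0 1), mkWalk (vv 0 1) (vv 2 4) (vv 1 3) (vv 0 2) (vv 3 4) (by decide) (by decide) (by decide) (by decide) (by decide),
          ?_, by rfl, by decide⟩
        rw [SimpleGraph.Walk.isCycle_def, SimpleGraph.Walk.isTrail_def]
        exact ⟨by decide, by simp [mkWalk], by decide⟩
      · refine ⟨(vv 0 2), mkWalk (vv 0 2) (vv 1 3) (vv 0 4) (vv 1 2) (vv 3 4) (by decide) (by decide) (by decide) (by decide) (by decide),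
          ?_, by rfl, by decide⟩
        rw [SimpleGraph.Walk.isCycle_def, SimpleGraph.Walk.isTrail_def]
        exact ⟨by decide, by simp [mkWalk], by decide⟩
      · refine ⟨(vv 0 2), mkWalk (vv 0 2) (vv 1 3) (vv 0 4) (vv 2 3) (vv 1 4) (by decide) (by decide) (by decide) (by decide) (by decide),
          ?_, by rfl, by decide⟩
        rw [SimpleGraph.Walk.isCycle_def, SimpleGraph.Walk.isTrail_def]
        exact ⟨by decide, by simp [mkWalk], by decide⟩
      · refine ⟨(vv 0 2), mkWalk (vv 0 2) (vv 1 3) (vv 2 4) (vv 0 3) (vv 1 4) (by decide) (by decide) (by decide) (by decide) (by decide),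
          ?_, by rfl, by decide⟩
        rw [SimpleGraph.Walk.isCycle_def, SimpleGraph.Walk.isTrail_def]
        exact ⟨by decide, by simp [mkWalk], by decide⟩
      · refine ⟨(vv 0 2), mkWalk (vv 0 2) (vv 1 4) (vv 0 3) (vv 1 2) (vv 3 4) (by decide) (by decide) (by decide) (by decide) (by decide),
          ?_, by rfl, by decide⟩
        rw [SimpleGraph.Walk.isCycle_def, SimpleGraph.Walk.isTrail_def]
        exact ⟨by decide, by simp [mkWalk], by decide⟩
      · refine ⟨(vv 0 3), mkWalk (vv 0 3) (vv 1 2) (vv 0 4) (vv 1 3) (vv 2 4) (by decide) (by decide) (by decide) (by decide) (by decide),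
          ?_, by rfl, by decide⟩
        rw [SimpleGraph.Walk.isCycle_def, SimpleGraph.Walk.isTrail_def]
        exact ⟨by decide, by simp [mkWalk], by decide⟩
      · refine ⟨(vv 0 3), mkWalk (vv 0 3) (vv 1 2) (vv 0 4) (vv 2 3) (vv 1 4) (by decide) (by decide) (by decide) (by decide) (by decide),
          ?_, by rfl, by decide⟩
        rw [SimpleGraph.Walk.isCycle_def, SimpleGraph.Walk.isTrail_def]
        exact ⟨by decide, by simp [mkWalk], by decide⟩
  calc Nat.card {E : Finset (Sym2 PV) //
      ∃ (v : PV) (p : petersen.Walk v v), p.IsCycle ∧ p.length = 5 ∧ p.edges.toFinset = E}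
      = Nat.card {E : Finset (Sym2 PV) // E ∈ S} :=
        Nat.card_congr (Equiv.subtypeEquivRight hiff)
    _ = S.card := by rw [Nat.card_eq_fintype_card, Fintype.card_coe]
    _ = 12 := by decide
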